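/- For every p ∈ (0,1) and τ > 0 there exist a constant C_{p,τ} > 0 (depending only on p and τ) and an absolute constant C > 0 such that for all integers n ≥ 1, m ∈ ℤ and l ∈ {0,…,N−1} (with N = 2^n), the column residual satisfies (Σ_{k=0}^{N−1} |ε_{mnkl}|^2)^{1/2} ≤ (C_{p,τ} + C τ |m|) / N^{1/2−p}, where ε_{mnkl} = (Ã_{m,n})_{kl} − ψ_m(θ_l) δ_{kl}. -/

import Mathlib

/-!
Write `N = 2^n`, `ζ = e^{2πi/N}` and `a = e^{-τ|m|^p/2}`. Since `o` is a bijection of `J_n` onto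
`{0,…,N-1}`, `∑_{j ∈ J_n} ζ^{(k-l) o(j)} = N δ_{kl}`, and this cancels the diagonal term exactly:
`ε_{mnkl} = N⁻¹ ζ^{km} ∑_j ζ^{(k-l) o(j)} (c^{(n)}_{mj} - a)`. Every entry of the column is thus
at most `D / N` with `D = ∑_j |c^{(n)}_{mj} - a|` (`cstDeviation`), and the column norm at most
`D / √N`.

In `D`, the at most `|m| + 1` indices with `m + j ∉ J_n` contribute `a` each, and `|m| a` is
bounded in `m`. For the others, `t ↦ e^{-t}` is 1-Lipschitz on `[0, ∞)` and concavity of `x ↦ x^p`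
gives `| |j|^p - |m+j|^p | ≤ p |m| (|j|^{p-1} + |m+j|^{p-1})`, while the same tangent-line bound
telescopes to `∑_{j ∈ J_n} |j|^{p-1} ≤ 2N^p/p`. Hence `D ≤ C_{p,τ} + 2τ|m| N^p`.
-/

noncomputable section

namespace QECD

/-- The index set `J_n = {−N/2,…,−1,1,…,N/2}` with `N = 2^n`. -/
def Jn (n : ℕ) : Finset ℤ := (Finset.Icc (-(2 ^ (n - 1)) : ℤ) (2 ^ (n - 1))).erase 0

/-- The order-preserving enumeration `o : J_n → {0,…,N−1}`. -/
def oIdx (n : ℕ) (j : ℤ) : ℤ := if j < 0 then j + 2 ^ (n - 1) else j + 2 ^ (n - 1) - 1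

/-- Scaled Fourier basis function `ψ_m(θ) = e^{−τ|m|^p/2} e^{imθ}`. -/
def psi (p τ : ℝ) (m : ℤ) (θ : ℝ) : ℂ :=
  (Real.exp (-(τ * |(m : ℝ)| ^ p) / 2) : ℂ) * Complex.exp (Complex.I * (m : ℂ) * (θ : ℂ))

/-- Structure constants `c_{mj} = e^{−τ(|m|^p + |j|^p − |m+j|^p)/2}`. -/
def cst (p τ : ℝ) (m j : ℤ) : ℝ :=
  Real.exp (-(τ * (|(m : ℝ)| ^ p + |(j : ℝ)| ^ p - |((m + j : ℤ) : ℝ)| ^ p)) / 2)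

/-- Truncated structure constants `c^{(n)}_{mj}`. -/
def cstN (p τ : ℝ) (n : ℕ) (m j : ℤ) : ℝ :=
  if m + j ∈ Jn n then cst p τ m j else 0

/-- Matrix elements `(Ã_{m,n})_{kl}` of the QFT-rotated multiplication operator. -/
def Atilde (p τ : ℝ) (n : ℕ) (m : ℤ) (k l : ℕ) : ℂ :=
  (1 / (2 ^ n : ℂ)) * ∑ j ∈ Jn n,
    Complex.exp (2 * (Real.pi : ℂ) * Complex.I *
        ((((k : ℤ) - (l : ℤ)) * oIdx n j + (k : ℤ) * m : ℤ) : ℂ) / (2 ^ n : ℂ)) *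
      (cstN p τ n m j : ℂ)

end QECD

open Finset

namespace Real

lemma rpow_le_tangent_of_le_one {p a b : ℝ} (hp0 : 0 ≤ p) (hp1 : p ≤ 1) (ha : 0 ≤ a)
    (hb : 0 < b) : a ^ p ≤ b ^ p + p * b ^ (p - 1) * (a - b) := by
  have hs : -1 ≤ a / b - 1 := by linarith [div_nonneg ha hb.le]
  have hbern := rpow_one_add_le_one_add_mul_self hs hp0 hp1
  rw [add_sub_cancel, div_rpow ha hb.le, div_le_iff₀ (rpow_pos_of_pos hb p)] at hbern
  calc a ^ p ≤ (1 + p * (a / b - 1)) * b ^ p := hbern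
    _ = b ^ p + p * b ^ (p - 1) * (a - b) := by
      rw [rpow_sub_one hb.ne']; field_simp

lemma abs_rpow_sub_rpow_le {p x y : ℝ} (hp0 : 0 ≤ p) (hp1 : p ≤ 1) (hx : 0 < x) (hy : 0 < y) :
    |x ^ p - y ^ p| ≤ p * |x - y| * (x ^ (p - 1) + y ^ (p - 1)) := by
  wlog hxy : x ≤ y generalizing x y
  · rw [abs_sub_comm, abs_sub_comm x, add_comm]; exact this hy hx (le_of_not_ge hxy)
  have hmono : x ^ p ≤ y ^ p := rpow_le_rpow hx.le hxy hp0
  have htan := rpow_le_tangent_of_le_one hp0 hp1 hy.le hx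
  rw [abs_of_nonpos (sub_nonpos.2 hmono), abs_of_nonpos (sub_nonpos.2 hxy)]
  nlinarith [mul_nonneg (mul_nonneg hp0 (sub_nonneg.2 hxy)) (rpow_nonneg hy.le (p - 1))]

lemma sum_range_add_one_rpow_le {p : ℝ} (hp0 : 0 < p) (hp1 : p ≤ 1) (M : ℕ) :
    ∑ i ∈ range M, ((i : ℝ) + 1) ^ (p - 1) ≤ (M : ℝ) ^ p / p := by
  induction M with
  | zero => simp [zero_rpow hp0.ne']
  | succ M ih =>
    have htan := rpow_le_tangent_of_le_one hp0.le hp1 (Nat.cast_nonneg M)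
      (by positivity : (0 : ℝ) < M + 1)
    rw [sum_range_succ, Nat.cast_succ, le_div_iff₀ hp0]
    rw [le_div_iff₀ hp0] at ih
    nlinarith

lemma abs_exp_neg_sub_exp_neg_le {α β : ℝ} (hα : 0 ≤ α) (hβ : 0 ≤ β) :
    |exp (-α) - exp (-β)| ≤ |α - β| := by
  wlog hβα : β ≤ α generalizing α β
  · rw [abs_sub_comm, abs_sub_comm α]; exact this hβ hα (le_of_not_ge hβα)
  have hdiff : exp (-β) - exp (-α) = exp (-β) * (1 - exp (-(α - β))) := by
    rw [mul_sub, mul_one, ← exp_add]; ring_nf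
  have hgap : 0 ≤ 1 - exp (-(α - β)) := sub_nonneg.2 (exp_le_one_iff.2 (by linarith))
  rw [abs_sub_comm, abs_of_nonneg (by rw [hdiff]; positivity), abs_of_nonneg (by linarith), hdiff]
  calc exp (-β) * (1 - exp (-(α - β))) ≤ 1 * (1 - exp (-(α - β))) :=
        mul_le_mul_of_nonneg_right (exp_le_one_iff.2 (by linarith)) hgap
    _ ≤ α - β := by linarith [one_sub_le_exp_neg (α - β)]

lemma exp_neg_le_factorial_div_pow {x : ℝ} (hx : 0 < x) (s : ℕ) :
    exp (-x) ≤ s.factorial / x ^ s := by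
  rw [exp_neg, inv_le_comm₀ (exp_pos x) (by positivity), inv_div]
  exact pow_div_factorial_le_exp (x := x) hx.le s

lemma exists_mul_exp_neg_mul_rpow_le {p c : ℝ} (hp : 0 < p) (hc : 0 < c) :
    ∃ K, ∀ y, 0 ≤ y → y * exp (-(c * y ^ p)) ≤ K := by
  set s := ⌈1 / p⌉₊
  have hps : 1 ≤ p * s := by
    have := Nat.le_ceil (1 / p)
    rwa [div_le_iff₀' hp] at this
  refine ⟨1 + s.factorial / c ^ s, fun y hy => ?_⟩
  have hexp1 : exp (-(c * y ^ p)) ≤ 1 := exp_le_one_iff.2 (by nlinarith [rpow_nonneg hy p])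
  rcases le_or_gt y 1 with hy1 | hy1
  · nlinarith [exp_pos (-(c * y ^ p)), (by positivity : (0 : ℝ) ≤ s.factorial / c ^ s)]
  have hyp : 0 < y ^ p := rpow_pos_of_pos (by linarith) p
  have hy_le : y ≤ (y ^ p) ^ s := by
    rw [← rpow_natCast, ← rpow_mul hy]
    calc y = y ^ (1 : ℝ) := (rpow_one y).symm
      _ ≤ y ^ (p * s) := rpow_le_rpow_of_exponent_le hy1.le hps
  calc y * exp (-(c * y ^ p)) ≤ (y ^ p) ^ s * (s.factorial / (c * y ^ p) ^ s) :=
        mul_le_mul hy_le (exp_neg_le_factorial_div_pow (by positivity) s) (exp_pos _).le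
          (by positivity)
    _ = s.factorial / c ^ s := by rw [mul_pow]; field_simp
    _ ≤ 1 + s.factorial / c ^ s := by linarith

lemma sqrt_sum_sq_norm_le {ι E : Type*} [SeminormedAddGroup E] (s : Finset ι) {f : ι → E}
    {b : ℝ} (hb : 0 ≤ b) (hf : ∀ i ∈ s, ‖f i‖ ≤ b) :
    √(∑ i ∈ s, ‖f i‖ ^ 2) ≤ √(#s : ℝ) * b :=
  calc √(∑ i ∈ s, ‖f i‖ ^ 2) ≤ √(∑ _i ∈ s, b ^ 2) :=
        sqrt_le_sqrt (sum_le_sum fun i hi => pow_le_pow_left₀ (norm_nonneg _) (hf i hi) 2)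
    _ = √(#s : ℝ) * b := by
        rw [sum_const, nsmul_eq_mul, sqrt_mul (Nat.cast_nonneg _), sqrt_sq hb]

lemma sqrt_mul_rpow_div_self {x : ℝ} (hx : 0 < x) (p : ℝ) :
    √x * (x ^ p / x) = 1 / x ^ (1 / 2 - p) := by
  rw [sqrt_eq_rpow, ← rpow_sub_one hx.ne', ← rpow_add hx, one_div (x ^ _),
    ← rpow_neg hx.le]
  ring_nf

end Real

lemma IsPrimitiveRoot.sum_range_zpow_mul {K : Type*} [Field K] {ζ : K} {N : ℕ}
    (hζ : IsPrimitiveRoot ζ N) (t : ℤ) :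
    ∑ s ∈ range N, ζ ^ (t * s) = if (N : ℤ) ∣ t then (N : K) else 0 := by
  simp_rw [zpow_mul, zpow_natCast]
  split_ifs with hdvd
  · simp [(hζ.zpow_eq_one_iff_dvd t).2 hdvd]
  · have hne : ζ ^ t ≠ 1 := mt (hζ.zpow_eq_one_iff_dvd t).1 hdvd
    have hroot : (ζ ^ t) ^ N = 1 := by
      rw [← zpow_natCast, ← zpow_mul, mul_comm, zpow_mul, zpow_natCast, hζ.pow_eq_one, one_zpow]
    rw [geom_sum_eq hne, hroot, sub_self, zero_div]

namespace QECD

lemma mem_Jn {n : ℕ} {j : ℤ} : j ∈ Jn n ↔ j ≠ 0 ∧ -2 ^ (n - 1) ≤ j ∧ j ≤ 2 ^ (n - 1) := by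
  simp [Jn]

lemma sum_Jn {M : Type*} [AddCommMonoid M] (n : ℕ) (f : ℤ → M) :
    ∑ j ∈ Jn n, f j = ∑ i ∈ range (2 ^ (n - 1)), (f (i + 1) + f (-(i + 1))) := by
  suffices ∀ K : ℕ, ∑ j ∈ (Icc (-(K : ℤ)) K).erase 0, f j
      = ∑ i ∈ range K, (f (i + 1) + f (-(i + 1))) by
    simpa [Jn] using this (2 ^ (n - 1))
  intro K
  induction K with
  | zero => simp
  | succ K ih =>
    have hsplit : (Icc (-((K + 1 : ℕ) : ℤ)) (K + 1 : ℕ)).erase 0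
        = insert ((K : ℤ) + 1) (insert (-((K : ℤ) + 1)) ((Icc (-(K : ℤ)) K).erase 0)) := by
      ext j; simp only [mem_erase, mem_Icc, mem_insert]; push_cast; omega
    rw [hsplit, sum_insert (by simp; omega), sum_insert (by simp), ih, sum_range_succ]
    abel

lemma sum_Jn_oIdx {M : Type*} [AddCommMonoid M] {n : ℕ} (hn : 1 ≤ n) (f : ℤ → M) :
    ∑ j ∈ Jn n, f (oIdx n j) = ∑ s ∈ range (2 ^ n), f s := by
  obtain ⟨n, rfl⟩ := Nat.exists_eq_add_of_le' hn
  have hflip : ∑ i ∈ range (2 ^ n), f ((2 ^ n - 1 - i : ℕ) : ℤ) = ∑ i ∈ range (2 ^ n), f i :=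
    sum_range_reflect (fun i => f i) _
  rw [sum_Jn, sum_add_distrib, pow_succ, mul_two, sum_range_add, add_comm, ← hflip]
  congr 1 <;> refine sum_congr rfl fun i hi => ?_
  · rw [mem_range] at hi
    rw [Nat.sub_sub, Nat.cast_sub (by omega)]
    simp only [oIdx, Nat.add_sub_cancel]; congr 1; split_ifs <;> push_cast <;> omega
  · simp only [oIdx, Nat.add_sub_cancel]; congr 1; split_ifs <;> push_cast <;> omega

lemma sum_Jn_zpow_oIdx {K : Type*} [Field K] {n : ℕ} (hn : 1 ≤ n) {ζ : K}
    (hζ : IsPrimitiveRoot ζ (2 ^ n)) {k l : ℕ} (hk : k < 2 ^ n) (hl : l < 2 ^ n) :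
    ∑ j ∈ Jn n, ζ ^ (((k : ℤ) - l) * oIdx n j) = if k = l then (2 ^ n : K) else 0 := by
  rw [sum_Jn_oIdx hn (fun s => ζ ^ (((k : ℤ) - l) * s)), hζ.sum_range_zpow_mul]
  by_cases hkl : k = l
  · simp [hkl]
  · rw [if_neg hkl, if_neg]
    intro hdvd
    zify at hk hl
    have := Int.eq_zero_of_abs_lt_dvd hdvd (by rw [abs_lt]; push_cast; omega)
    omega

lemma sum_Jn_abs_rpow_le {p : ℝ} (hp0 : 0 < p) (hp1 : p ≤ 1) (n : ℕ) :
    ∑ j ∈ Jn n, |(j : ℝ)| ^ (p - 1) ≤ 2 * (2 ^ n : ℝ) ^ p / p := by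
  have hpair : ∀ i : ℕ, |(((i : ℤ) + 1 : ℤ) : ℝ)| ^ (p - 1) + |((-((i : ℤ) + 1) : ℤ) : ℝ)| ^ (p - 1)
      = 2 * ((i : ℝ) + 1) ^ (p - 1) := fun i => by
    push_cast; rw [abs_neg, abs_of_pos (by positivity)]; ring
  rw [sum_Jn, sum_congr rfl fun i _ => hpair i, ← mul_sum, mul_div_assoc]
  gcongr
  refine (Real.sum_range_add_one_rpow_le hp0 hp1 _).trans ?_
  gcongr
  push_cast
  exact pow_le_pow_right₀ one_le_two (Nat.sub_le n 1)

lemma card_filter_add_notMem_Jn_le (n : ℕ) (m : ℤ) :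
    #{j ∈ Jn n | m + j ∉ Jn n} ≤ m.natAbs + 1 := by
  set M : ℤ := 2 ^ (n - 1)
  have hsub : {j ∈ Jn n | m + j ∉ Jn n} ⊆ insert (-m) (Ioc (M - m) M ∪ Ico (-M) (-M - m)) := by
    intro j hj
    simp only [mem_filter, mem_Jn, mem_insert, mem_union, mem_Ioc, mem_Ico] at hj ⊢
    omega
  calc #{j ∈ Jn n | m + j ∉ Jn n}
      ≤ #(Ioc (M - m) M ∪ Ico (-M) (-M - m)) + 1 := (card_le_card hsub).trans (card_insert_le _ _)
    _ ≤ #(Ioc (M - m) M) + #(Ico (-M) (-M - m)) + 1 := by gcongr; exact card_union_le _ _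
    _ = m.natAbs + 1 := by rw [Int.card_Ioc, Int.card_Ico]; omega

def cstDeviation (p τ : ℝ) (n : ℕ) (m : ℤ) : ℝ :=
  ∑ j ∈ Jn n, |cstN p τ n m j - Real.exp (-(τ * |(m : ℝ)| ^ p) / 2)|

section RootsOfUnity

open Complex

lemma cexp_int_div_two_pow (n : ℕ) (x : ℤ) :
    exp (2 * Real.pi * I * x / 2 ^ n) = exp (2 * Real.pi * I / 2 ^ n) ^ x := by
  rw [← exp_int_mul]; ring_nf

lemma isPrimitiveRoot_cexp_two_pow (n : ℕ) :
    IsPrimitiveRoot (exp (2 * Real.pi * I / 2 ^ n)) (2 ^ n) := by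
  simpa using isPrimitiveRoot_exp (2 ^ n) (by positivity)

lemma Atilde_sub_psi_eq {n : ℕ} (hn : 1 ≤ n) (p τ : ℝ) (m : ℤ) {k l : ℕ}
    (hk : k < 2 ^ n) (hl : l < 2 ^ n) :
    Atilde p τ n m k l - psi p τ m (2 * Real.pi * l / 2 ^ n) * (if k = l then 1 else 0)
      = 1 / 2 ^ n * (exp (2 * Real.pi * I / 2 ^ n) ^ ((k : ℤ) * m) *
          ∑ j ∈ Jn n, exp (2 * Real.pi * I / 2 ^ n) ^ (((k : ℤ) - l) * oIdx n j) *
            ((cstN p τ n m j - Real.exp (-(τ * |(m : ℝ)| ^ p) / 2) : ℝ) : ℂ)) := by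
  set ζ : ℂ := exp (2 * Real.pi * I / 2 ^ n)
  set a : ℝ := Real.exp (-(τ * |(m : ℝ)| ^ p) / 2) with ha
  have hA : Atilde p τ n m k l = 1 / 2 ^ n * (ζ ^ ((k : ℤ) * m) *
      ∑ j ∈ Jn n, ζ ^ (((k : ℤ) - l) * oIdx n j) * cstN p τ n m j) := by
    rw [Atilde]
    congr 1
    rw [mul_sum]
    refine sum_congr rfl fun j _ => ?_
    rw [cexp_int_div_two_pow, zpow_add₀ (exp_ne_zero _)]
    ring
  have hpsi : psi p τ m (2 * Real.pi * l / 2 ^ n) * (if k = l then 1 else 0)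
      = 1 / 2 ^ n * (ζ ^ ((k : ℤ) * m) * ∑ j ∈ Jn n, ζ ^ (((k : ℤ) - l) * oIdx n j) * a) := by
    rw [← sum_mul, sum_Jn_zpow_oIdx hn (isPrimitiveRoot_cexp_two_pow n) hk hl]
    split_ifs with hkl
    · subst hkl
      have hphase : exp (I * m * (2 * Real.pi * k / 2 ^ n : ℝ)) = ζ ^ ((k : ℤ) * m) := by
        rw [← cexp_int_div_two_pow]; push_cast; ring_nf
      rw [psi, ← ha, hphase]
      field_simp
    · simp
  rw [hA, hpsi, ← mul_sub, ← mul_sub, ← sum_sub_distrib]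
  push_cast
  simp_rw [mul_sub]

lemma norm_Atilde_sub_psi_le {n : ℕ} (hn : 1 ≤ n) (p τ : ℝ) (m : ℤ) {k l : ℕ}
    (hk : k < 2 ^ n) (hl : l < 2 ^ n) :
    ‖Atilde p τ n m k l - psi p τ m (2 * Real.pi * l / 2 ^ n) * (if k = l then 1 else 0)‖
      ≤ cstDeviation p τ n m / 2 ^ n := by
  have hunit : ∀ x : ℤ, ‖exp (2 * Real.pi * I / 2 ^ n) ^ x‖ = 1 := fun x => by
    rw [norm_zpow, (isPrimitiveRoot_cexp_two_pow n).norm'_eq_one (by positivity), one_zpow]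
  rw [Atilde_sub_psi_eq hn p τ m hk hl, norm_mul, norm_mul, hunit, one_mul, norm_div, norm_one,
    norm_pow, Complex.norm_two, one_div_mul_eq_div, cstDeviation]
  gcongr
  refine (norm_sum_le _ _).trans (le_of_eq ?_)
  simp_rw [norm_mul, hunit, one_mul, Complex.norm_real, Real.norm_eq_abs]

end RootsOfUnity

lemma abs_cst_sub_exp_le {p τ : ℝ} (hp0 : 0 ≤ p) (hp1 : p ≤ 1) (hτ : 0 ≤ τ) {m j : ℤ}
    (hj : j ≠ 0) (hmj : m + j ≠ 0) :
    |cst p τ m j - Real.exp (-(τ * |(m : ℝ)| ^ p) / 2)|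
      ≤ τ * p / 2 * |(m : ℝ)| * (|(j : ℝ)| ^ (p - 1) + |((m + j : ℤ) : ℝ)| ^ (p - 1)) := by
  set x := |(j : ℝ)|
  set y := |((m + j : ℤ) : ℝ)|
  set μ := |(m : ℝ)|
  have hx : 0 < x := abs_pos.2 (Int.cast_ne_zero.2 hj)
  have hy : 0 < y := abs_pos.2 (Int.cast_ne_zero.2 hmj)
  have hyx : y ≤ μ + x := by simp only [x, y, μ]; push_cast; exact abs_add_le _ _
  have hsub : y ^ p ≤ μ ^ p + x ^ p :=
    (Real.rpow_le_rpow hy.le hyx hp0).trans (Real.rpow_add_le_add_rpow (abs_nonneg _) hx.le hp0 hp1)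
  have hdist : |x - y| ≤ μ := by
    simpa [x, y, μ, abs_sub_comm] using abs_abs_sub_abs_le_abs_sub (j : ℝ) ((m + j : ℤ) : ℝ)
  have hexp : |cst p τ m j - Real.exp (-(τ * μ ^ p) / 2)| ≤ τ / 2 * |x ^ p - y ^ p| :=
    calc |cst p τ m j - Real.exp (-(τ * μ ^ p) / 2)|
        = |Real.exp (-(τ * (μ ^ p + x ^ p - y ^ p) / 2)) - Real.exp (-(τ * μ ^ p / 2))| := by
          rw [cst, neg_div, neg_div]
      _ ≤ |τ * (μ ^ p + x ^ p - y ^ p) / 2 - τ * μ ^ p / 2| :=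
          Real.abs_exp_neg_sub_exp_neg_le (div_nonneg (mul_nonneg hτ (by linarith)) two_pos.le)
            (by positivity)
      _ = τ / 2 * |x ^ p - y ^ p| := by
          rw [show τ * (μ ^ p + x ^ p - y ^ p) / 2 - τ * μ ^ p / 2 = τ / 2 * (x ^ p - y ^ p) by
            ring, abs_mul, abs_of_nonneg (by positivity)]
  calc |cst p τ m j - Real.exp (-(τ * μ ^ p) / 2)|
      ≤ τ / 2 * (p * |x - y| * (x ^ (p - 1) + y ^ (p - 1))) :=
        hexp.trans (by gcongr; exact Real.abs_rpow_sub_rpow_le hp0 hp1 hx hy)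
    _ ≤ τ / 2 * (p * μ * (x ^ (p - 1) + y ^ (p - 1))) := by gcongr
    _ = τ * p / 2 * μ * (x ^ (p - 1) + y ^ (p - 1)) := by ring

lemma sum_interior_abs_cstN_sub_exp_le {p τ : ℝ} (hp0 : 0 < p) (hp1 : p ≤ 1) (hτ : 0 ≤ τ)
    (n : ℕ) (m : ℤ) :
    ∑ j ∈ Jn n with m + j ∈ Jn n, |cstN p τ n m j - Real.exp (-(τ * |(m : ℝ)| ^ p) / 2)|
      ≤ 2 * τ * |(m : ℝ)| * (2 ^ n : ℝ) ^ p := by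
  set I := {j ∈ Jn n | m + j ∈ Jn n}
  have hweight : ∀ s ⊆ Jn n, ∑ j ∈ s, |(j : ℝ)| ^ (p - 1) ≤ 2 * (2 ^ n : ℝ) ^ p / p := fun s hs =>
    (sum_le_sum_of_subset_of_nonneg hs fun _ _ _ => by positivity).trans
      (sum_Jn_abs_rpow_le hp0 hp1 n)
  have hshift : ∑ j ∈ I, |((m + j : ℤ) : ℝ)| ^ (p - 1) ≤ 2 * (2 ^ n : ℝ) ^ p / p := by
    have hreindex := sum_image (s := I) (f := fun i : ℤ => |(i : ℝ)| ^ (p - 1)) (g := (m + ·))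
      fun _ _ _ _ h => add_left_cancel h
    rw [← hreindex]
    refine hweight _ fun i hi => ?_
    obtain ⟨j, hj, rfl⟩ := mem_image.1 hi
    exact (mem_filter.1 hj).2
  calc ∑ j ∈ I, |cstN p τ n m j - Real.exp (-(τ * |(m : ℝ)| ^ p) / 2)|
      ≤ ∑ j ∈ I, τ * p / 2 * |(m : ℝ)| * (|(j : ℝ)| ^ (p - 1) + |((m + j : ℤ) : ℝ)| ^ (p - 1)) := by
        refine sum_le_sum fun j hj => ?_
        obtain ⟨hj, hmj⟩ := mem_filter.1 hj
        rw [cstN, if_pos hmj]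
        exact abs_cst_sub_exp_le hp0.le hp1 hτ (mem_Jn.1 hj).1 (mem_Jn.1 hmj).1
    _ = τ * p / 2 * |(m : ℝ)| * (∑ j ∈ I, |(j : ℝ)| ^ (p - 1)
          + ∑ j ∈ I, |((m + j : ℤ) : ℝ)| ^ (p - 1)) := by
        rw [← sum_add_distrib, mul_sum]
    _ ≤ τ * p / 2 * |(m : ℝ)| * (2 * (2 ^ n : ℝ) ^ p / p + 2 * (2 ^ n : ℝ) ^ p / p) := by
        gcongr
        · exact hweight I (filter_subset _ _)
    _ = 2 * τ * |(m : ℝ)| * (2 ^ n : ℝ) ^ p := by field_simp; ring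

lemma sum_boundary_abs_cstN_sub_exp_le {p τ K : ℝ} (hτ : 0 ≤ τ)
    (hK : ∀ y, 0 ≤ y → y * Real.exp (-(τ / 2 * y ^ p)) ≤ K) (n : ℕ) (m : ℤ) :
    ∑ j ∈ Jn n with m + j ∉ Jn n, |cstN p τ n m j - Real.exp (-(τ * |(m : ℝ)| ^ p) / 2)|
      ≤ 1 + K := by
  set a := Real.exp (-(τ * |(m : ℝ)| ^ p) / 2)
  have ha1 : a ≤ 1 := by
    have : 0 ≤ τ * |(m : ℝ)| ^ p := by positivity
    exact Real.exp_le_one_iff.2 (by linarith)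
  have hma : |(m : ℝ)| * a ≤ K := by
    simpa [a, neg_div, mul_div_right_comm] using hK |(m : ℝ)| (abs_nonneg _)
  have hcard : (#{j ∈ Jn n | m + j ∉ Jn n} : ℝ) ≤ |(m : ℝ)| + 1 := by
    rw [← Int.cast_abs, ← Int.natCast_natAbs]
    exact_mod_cast card_filter_add_notMem_Jn_le n m
  calc ∑ j ∈ Jn n with m + j ∉ Jn n, |cstN p τ n m j - a|
      = #{j ∈ Jn n | m + j ∉ Jn n} * a := by
        rw [sum_congr rfl fun j hj => by
          rw [cstN, if_neg (mem_filter.1 hj).2, zero_sub, abs_neg, abs_of_pos (Real.exp_pos _)],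
          sum_const, nsmul_eq_mul]
    _ ≤ (|(m : ℝ)| + 1) * a := by gcongr
    _ ≤ 1 + K := by linarith

lemma cstDeviation_le {p τ K : ℝ} (hp0 : 0 < p) (hp1 : p ≤ 1) (hτ : 0 ≤ τ)
    (hK : ∀ y, 0 ≤ y → y * Real.exp (-(τ / 2 * y ^ p)) ≤ K) (n : ℕ) (m : ℤ) :
    cstDeviation p τ n m ≤ 1 + K + 2 * τ * |(m : ℝ)| * (2 ^ n : ℝ) ^ p := by
  rw [cstDeviation, ← sum_filter_add_sum_filter_not (Jn n) (fun j => m + j ∈ Jn n)]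
  linarith [sum_interior_abs_cstN_sub_exp_le hp0 hp1 hτ n m,
    sum_boundary_abs_cstN_sub_exp_le hτ hK n m]

/-- For every `p ∈ (0,1)` and `τ > 0` there are a constant `C_{p,τ} > 0`
and an absolute constant `C > 0` such that the column residual satisfies
`(Σ_k |ε_{mnkl}|²)^{1/2} ≤ (C_{p,τ} + C τ |m|) / N^{1/2−p}`. -/
theorem column_residual_bound :
    ∃ C : ℝ, 0 < C ∧
      ∀ (p τ : ℝ), p ∈ Set.Ioo (0 : ℝ) 1 → 0 < τ →
        ∃ Cpt : ℝ, 0 < Cpt ∧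
          ∀ (n : ℕ), 1 ≤ n → ∀ (m : ℤ) (l : ℕ), l < 2 ^ n →
            Real.sqrt (∑ k ∈ Finset.range (2 ^ n),
                (‖Atilde p τ n m k l
                  - psi p τ m (2 * Real.pi * l / 2 ^ n) * (if k = l then 1 else 0)‖) ^ 2)
              ≤ (Cpt + C * τ * |(m : ℝ)|) / ((2 ^ n : ℝ)) ^ ((1 : ℝ) / 2 - p) := by
  refine ⟨2, two_pos, fun p τ ⟨hp0, hp1⟩ hτ => ?_⟩
  obtain ⟨K, hK⟩ := Real.exists_mul_exp_neg_mul_rpow_le hp0 (half_pos hτ)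
  have hK0 : 0 ≤ K := by simpa using hK 0 le_rfl
  refine ⟨1 + K, by positivity, fun n hn m l hl => ?_⟩
  have hN : (0 : ℝ) < 2 ^ n := by positivity
  have hNp : 1 ≤ (2 ^ n : ℝ) ^ p := Real.one_le_rpow (one_le_pow₀ one_le_two) hp0.le
  have hdev : cstDeviation p τ n m ≤ (1 + K + 2 * τ * |(m : ℝ)|) * (2 ^ n : ℝ) ^ p := by
    nlinarith [cstDeviation_le hp0 hp1.le hτ.le hK n m]
  calc _ ≤ √(2 ^ n : ℝ) * (cstDeviation p τ n m / 2 ^ n) := by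
        simpa using Real.sqrt_sum_sq_norm_le (range (2 ^ n)) (by rw [cstDeviation]; positivity)
          fun k hk => norm_Atilde_sub_psi_le hn p τ m (mem_range.1 hk) hl
    _ ≤ √(2 ^ n : ℝ) * ((1 + K + 2 * τ * |(m : ℝ)|) * (2 ^ n : ℝ) ^ p / 2 ^ n) := by gcongr
    _ = (1 + K + 2 * τ * |(m : ℝ)|) / (2 ^ n : ℝ) ^ ((1 : ℝ) / 2 - p) := by
        rw [mul_div_assoc, mul_left_comm, Real.sqrt_mul_rpow_div_self hN, mul_one_div]

end QECD
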